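/- Let G : [0,1] → [0,∞) be increasing and continuous with G(0) = 0, G positive on (0,1], and G(1) < 1. Define m(x) = log(1/G(x)) for x ∈ (0,1] and m(x) = log(1/G(1)) for x > 1, and let m_*(x) = inf_{y>0}(m(y) + x·y) be the lower Legendre envelope of m. Let P_G(x) = ∫₀¹ G(1−r)·r^x dr be the moment function of G. Then there exists x₀ > 0 such that for all x ≥ x₀, exp(−m_*(2x))/(4x) ≤ P_G(x) ≤ exp(−m_*(x)). -/

import Mathlib

/-!
Upper bound: on `(0, 1)` we have `r ^ x ≤ exp (-x (1 - r))`, so the integrand is at most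
`exp (-(m (1 - r) + x (1 - r))) ≤ exp (-m_*(x))`.

Lower bound: for `0 < z < 1`, integrating only over `r < 1 - z` gives
`P_G(x) ≥ G(z) (1 - z)^(x+1) / (x+1) ≥ G(z) exp (-(x+1) z / (1 - z)) / (x+1)`.
For `z ≤ 1/3` this dominates `G(z) exp (-2xz) / (4x)` once `x ≥ 3`. For `z > 1/3` the term
`G(min z 1) exp (-2xz)` is at most `G(1) exp (-2x/3)`, which for large `x` is beaten by the bound
at `z = 1/3`, decaying only like `exp (-(x+1)/2)`.
-/

open MeasureTheory Set Filter
open scoped Real ENNReal Topology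

noncomputable section

/-- Lower Legendre envelope m_*(x) = inf_{y>0} (m(y) + x y). -/
def lowerLegendre (m : ℝ → ℝ) (x : ℝ) : ℝ :=
  sInf ((fun y => m y + x * y) '' Set.Ioi 0)

/-- The extension m of log(1/G): m(x) = log(1/G(x)) for x ∈ (0,1] and
m(x) = log(1/G(1)) for x > 1. -/
def mExt (G : ℝ → ℝ) (x : ℝ) : ℝ :=
  if x ≤ 1 then Real.log (1 / G x) else Real.log (1 / G 1)

/-- The moment function P_G(x) = ∫₀¹ G(1-r) rˣ dr. -/
def momentFun (G : ℝ → ℝ) (x : ℝ) : ℝ :=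
  ∫ r in Set.Ioo (0:ℝ) 1, G (1 - r) * r ^ x

open Real

section LowerLegendre

variable {m : ℝ → ℝ} {x : ℝ}

theorem lowerLegendre_le (hm : BddBelow (m '' Ioi 0)) (hx : 0 ≤ x) {y : ℝ} (hy : 0 < y) :
    lowerLegendre m x ≤ m y + x * y := by
  obtain ⟨b, hb⟩ := hm
  refine csInf_le ⟨b, ?_⟩ ⟨y, hy, rfl⟩
  rintro _ ⟨z, hz, rfl⟩
  have := hb ⟨z, hz, rfl⟩
  nlinarith [mem_Ioi.1 hz]

theorem exp_neg_lowerLegendre_le {C : ℝ} (h : ∀ y > 0, exp (-(m y + x * y)) ≤ C) :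
    exp (-lowerLegendre m x) ≤ C := by
  have hC : 0 < C := (exp_pos _).trans_le (h 1 one_pos)
  suffices -log C ≤ lowerLegendre m x by
    simpa [exp_log hC] using exp_le_exp.2 (neg_le.1 this)
  refine le_csInf ⟨_, 1, mem_Ioi.2 one_pos, rfl⟩ ?_
  rintro _ ⟨y, hy, rfl⟩
  have := log_le_log (exp_pos _) (h y hy)
  rw [log_exp] at this
  linarith

end LowerLegendre

section Moment

variable {G : ℝ → ℝ}

theorem exp_neg_mExt (hGpos : ∀ x ∈ Ioc (0:ℝ) 1, 0 < G x) {z : ℝ} (hz : 0 < z) :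
    exp (-mExt G z) = G (min z 1) := by
  have hm : mExt G z = log (1 / G (min z 1)) := by
    unfold mExt
    split_ifs with h
    · rw [min_eq_left h]
    · rw [min_eq_right (le_of_not_ge h)]
  rw [hm, one_div, log_inv, neg_neg, exp_log (hGpos _ ⟨lt_min hz one_pos, min_le_right z 1⟩)]

theorem mExt_bddBelow (hGmono : MonotoneOn G (Icc 0 1)) (hGpos : ∀ x ∈ Ioc (0:ℝ) 1, 0 < G x) :
    BddBelow (mExt G '' Ioi 0) := by
  refine ⟨-log (G 1), ?_⟩
  rintro _ ⟨z, hz, rfl⟩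
  have hw : min z 1 ∈ Ioc (0:ℝ) 1 := ⟨lt_min hz one_pos, min_le_right z 1⟩
  have hle : G (min z 1) ≤ G 1 := hGmono (Ioc_subset_Icc_self hw) ⟨zero_le_one, le_rfl⟩ hw.2
  rwa [← neg_le_neg_iff, neg_neg, ← exp_le_exp, exp_neg_mExt hGpos hz,
    exp_log (hGpos 1 ⟨one_pos, le_rfl⟩)]

theorem integrableOn_momentFun_integrand (hGmono : MonotoneOn G (Icc 0 1)) {x : ℝ} (hx : 0 ≤ x) :
    IntegrableOn (fun r => G (1 - r) * r ^ x) (Ioo 0 1) := by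
  have hanti : AntitoneOn (fun r => G (1 - r)) (Icc 0 1) := fun r hr s hs hrs =>
    hGmono ⟨by linarith [hs.2], by linarith [hs.1]⟩ ⟨by linarith [hr.2], by linarith [hr.1]⟩
      (by linarith)
  exact ((hanti.integrableOn_isCompact isCompact_Icc).mul_continuousOn
    (continuous_rpow_const hx).continuousOn isCompact_Icc).mono_set Ioo_subset_Icc_self

theorem momentFun_integrand_nonneg (hGpos : ∀ x ∈ Ioc (0:ℝ) 1, 0 < G x) (x : ℝ) {r : ℝ}
    (hr : r ∈ Ioo (0:ℝ) 1) : 0 ≤ G (1 - r) * r ^ x :=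
  mul_nonneg (hGpos _ ⟨by linarith [hr.2], by linarith [hr.1]⟩).le (rpow_nonneg hr.1.le x)

theorem momentFun_le_exp_neg_lowerLegendre (hGmono : MonotoneOn G (Icc 0 1))
    (hGpos : ∀ x ∈ Ioc (0:ℝ) 1, 0 < G x) {x : ℝ} (hx : 0 ≤ x) :
    momentFun G x ≤ exp (-lowerLegendre (mExt G) x) := by
  have hpointwise : ∀ r ∈ Ioo (0:ℝ) 1, G (1 - r) * r ^ x ≤ exp (-lowerLegendre (mExt G) x) := by
    intro r hr
    have hw : 0 < 1 - r := by linarith [hr.2]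
    have hrx : r ^ x ≤ exp (-(x * (1 - r))) := by
      rw [rpow_def_of_pos hr.1, exp_le_exp]
      nlinarith [log_le_sub_one_of_pos hr.1]
    calc G (1 - r) * r ^ x ≤ G (1 - r) * exp (-(x * (1 - r))) :=
          mul_le_mul_of_nonneg_left hrx (hGpos _ ⟨hw, by linarith [hr.1]⟩).le
      _ = exp (-(mExt G (1 - r) + x * (1 - r))) := by
          rw [neg_add, exp_add, exp_neg_mExt hGpos hw, min_eq_left (by linarith [hr.1])]
      _ ≤ exp (-lowerLegendre (mExt G) x) :=
          exp_le_exp.2 (neg_le_neg (lowerLegendre_le (mExt_bddBelow hGmono hGpos) hx hw))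
  calc momentFun G x ≤ ∫ _ in Ioo (0:ℝ) 1, exp (-lowerLegendre (mExt G) x) :=
        setIntegral_mono_on (integrableOn_momentFun_integrand hGmono hx)
          (integrableOn_const measure_Ioo_lt_top.ne) measurableSet_Ioo hpointwise
    _ = exp (-lowerLegendre (mExt G) x) := by simp

theorem exp_neg_div_one_sub_le_one_sub {z : ℝ} (hz : z < 1) : exp (-(z / (1 - z))) ≤ 1 - z := by
  have h1z : 0 < 1 - z := by linarith
  calc exp (-(z / (1 - z))) = exp (1 - (1 - z)⁻¹) := by congr 1; field_simp; ring
    _ ≤ exp (log (1 - z)) := exp_le_exp.2 (one_sub_inv_le_log_of_pos h1z)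
    _ = 1 - z := exp_log h1z

theorem mul_one_sub_rpow_le_momentFun (hGmono : MonotoneOn G (Icc 0 1))
    (hGpos : ∀ x ∈ Ioc (0:ℝ) 1, 0 < G x) {x z : ℝ} (hx : 0 ≤ x) (hz : z ∈ Ioo (0:ℝ) 1) :
    G z * (1 - z) ^ (x + 1) / (x + 1) ≤ momentFun G x := by
  have hint := integrableOn_momentFun_integrand hGmono hx
  have hsub : Ioo 0 (1 - z) ⊆ Ioo (0:ℝ) 1 := Ioo_subset_Ioo_right (by linarith [hz.1])
  have hpow : ∫ r in Ioo 0 (1 - z), r ^ x = (1 - z) ^ (x + 1) / (x + 1) := by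
    rw [← integral_Ioc_eq_integral_Ioo, ← intervalIntegral.integral_of_le (by linarith [hz.2]),
      integral_rpow (Or.inl (by linarith)), zero_rpow (by linarith), sub_zero]
  calc G z * (1 - z) ^ (x + 1) / (x + 1) = ∫ r in Ioo 0 (1 - z), G z * r ^ x := by
        rw [integral_const_mul, hpow, mul_div_assoc]
    _ ≤ ∫ r in Ioo 0 (1 - z), G (1 - r) * r ^ x := by
        refine setIntegral_mono_on ?_ (hint.mono_set hsub) measurableSet_Ioo fun r hr => ?_
        · exact ((intervalIntegral.intervalIntegrable_rpow' (by linarith : (-1:ℝ) < x)).1.mono_set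
            Ioo_subset_Ioc_self).const_mul _
        · refine mul_le_mul_of_nonneg_right ?_ (rpow_nonneg hr.1.le x)
          exact hGmono ⟨hz.1.le, hz.2.le⟩ ⟨by linarith [hr.2, hz.1], by linarith [hr.1]⟩
            (by linarith [hr.2])
    _ ≤ momentFun G x :=
        setIntegral_mono_set hint
          (ae_restrict_of_forall_mem measurableSet_Ioo fun _ hr =>
            momentFun_integrand_nonneg hGpos x hr)
          hsub.eventuallyLE

theorem mul_exp_le_mul_momentFun (hGmono : MonotoneOn G (Icc 0 1))
    (hGpos : ∀ x ∈ Ioc (0:ℝ) 1, 0 < G x) {x z : ℝ} (hx : 0 ≤ x) (hz : z ∈ Ioo (0:ℝ) 1) :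
    G z * exp (-((x + 1) * (z / (1 - z)))) ≤ (x + 1) * momentFun G x := by
  have hx1 : 0 < x + 1 := by linarith
  have h := mul_one_sub_rpow_le_momentFun hGmono hGpos hx hz
  rw [div_le_iff₀ hx1] at h
  calc G z * exp (-((x + 1) * (z / (1 - z))))
      = G z * exp (-(z / (1 - z))) ^ (x + 1) := by rw [← exp_mul]; ring_nf
    _ ≤ G z * (1 - z) ^ (x + 1) :=
        mul_le_mul_of_nonneg_left
          (rpow_le_rpow (exp_pos _).le (exp_neg_div_one_sub_le_one_sub hz.2) hx1.le)
          (hGpos z ⟨hz.1, hz.2.le⟩).le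
    _ ≤ (x + 1) * momentFun G x := by linarith

theorem momentFun_nonneg (hGpos : ∀ x ∈ Ioc (0:ℝ) 1, 0 < G x) (x : ℝ) : 0 ≤ momentFun G x :=
  setIntegral_nonneg measurableSet_Ioo fun _ hr => momentFun_integrand_nonneg hGpos x hr

theorem mul_exp_le_momentFun_of_le_third (hGmono : MonotoneOn G (Icc 0 1))
    (hGpos : ∀ x ∈ Ioc (0:ℝ) 1, 0 < G x) {x z : ℝ} (hx : 3 ≤ x) (hz : 0 < z) (hz3 : z ≤ 1 / 3) :
    G z * exp (-(2 * x * z)) ≤ 4 * x * momentFun G x := by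
  have hdiv : z / (1 - z) ≤ 3 / 2 * z := by
    rw [div_le_iff₀ (by linarith)]
    nlinarith
  calc G z * exp (-(2 * x * z)) ≤ G z * exp (-((x + 1) * (z / (1 - z)))) :=
        mul_le_mul_of_nonneg_left (exp_le_exp.2 (by nlinarith))
          (hGpos z ⟨hz, by linarith⟩).le
    _ ≤ (x + 1) * momentFun G x :=
        mul_exp_le_mul_momentFun hGmono hGpos (by linarith) ⟨hz, by linarith⟩
    _ ≤ 4 * x * momentFun G x :=
        mul_le_mul_of_nonneg_right (by linarith) (momentFun_nonneg hGpos x)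

theorem mul_exp_le_momentFun_of_third_lt (hGmono : MonotoneOn G (Icc 0 1))
    (hGpos : ∀ x ∈ Ioc (0:ℝ) 1, 0 < G x) {x z : ℝ} (hx3 : 3 ≤ x)
    (hx : 3 + 6 * log (G 1 / G (1 / 3)) ≤ x) (hz : 1 / 3 < z) :
    G (min z 1) * exp (-(2 * x * z)) ≤ 4 * x * momentFun G x := by
  have hG3 : 0 < G (1 / 3) := hGpos _ ⟨by norm_num, by norm_num⟩
  have hG1 : 0 < G 1 := hGpos 1 ⟨one_pos, le_rfl⟩
  have hmin : min z 1 ∈ Ioc (0:ℝ) 1 := ⟨lt_min (by linarith) one_pos, min_le_right z 1⟩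
  have hratio : G 1 ≤ G (1 / 3) * exp ((x - 3) / 6) := by
    rw [← div_le_iff₀' hG3, ← exp_log (div_pos hG1 hG3), exp_le_exp]
    linarith
  calc G (min z 1) * exp (-(2 * x * z)) ≤ G 1 * exp (-(2 * x / 3)) :=
        mul_le_mul (hGmono (Ioc_subset_Icc_self hmin) ⟨zero_le_one, le_rfl⟩ hmin.2)
          (exp_le_exp.2 (by nlinarith)) (exp_pos _).le hG1.le
    _ ≤ G (1 / 3) * exp ((x - 3) / 6) * exp (-(2 * x / 3)) :=
        mul_le_mul_of_nonneg_right hratio (exp_pos _).le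
    _ = G (1 / 3) * exp (-((x + 1) * ((1 / 3) / (1 - 1 / 3)))) := by
        rw [mul_assoc, ← exp_add]
        ring_nf
    _ ≤ (x + 1) * momentFun G x :=
        mul_exp_le_mul_momentFun hGmono hGpos (by linarith) ⟨by norm_num, by norm_num⟩
    _ ≤ 4 * x * momentFun G x :=
        mul_le_mul_of_nonneg_right (by linarith) (momentFun_nonneg hGpos x)

end Moment

theorem moment_function_estimates_general
    (G : ℝ → ℝ)
    (hGmono : MonotoneOn G (Set.Icc 0 1))
    (hGpos : ∀ x ∈ Set.Ioc (0:ℝ) 1, 0 < G x) :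
    ∃ x₀ > (0:ℝ), ∀ x ≥ x₀,
      Real.exp (-(lowerLegendre (mExt G) (2 * x))) / (4 * x) ≤ momentFun G x ∧
      momentFun G x ≤ Real.exp (-(lowerLegendre (mExt G) x)) := by
  refine ⟨max 3 (3 + 6 * log (G 1 / G (1 / 3))), lt_max_of_lt_left (by norm_num), fun x hx => ?_⟩
  have hx3 : 3 ≤ x := le_of_max_le_left hx
  refine ⟨?_, momentFun_le_exp_neg_lowerLegendre hGmono hGpos (by linarith)⟩
  rw [div_le_iff₀ (by linarith), mul_comm (momentFun G x)]
  refine exp_neg_lowerLegendre_le fun y hy => ?_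
  rw [neg_add, exp_add, exp_neg_mExt hGpos hy]
  rcases le_or_gt y (1 / 3) with hy3 | hy3
  · rw [min_eq_left (by linarith)]
    exact mul_exp_le_momentFun_of_le_third hGmono hGpos hx3 hy hy3
  · exact mul_exp_le_momentFun_of_third_lt hGmono hGpos hx3 (le_of_max_le_right hx) hy3

/-- **Moment function estimates.** For large x,
exp(-m_*(2x))/(4x) ≤ P_G(x) ≤ exp(-m_*(x)). -/
theorem moment_function_estimates
    (G : ℝ → ℝ)
    (hGmono : MonotoneOn G (Set.Icc 0 1))
    (hGcont : ContinuousOn G (Set.Icc 0 1))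
    (hG0 : G 0 = 0)
    (hGpos : ∀ x ∈ Set.Ioc (0:ℝ) 1, 0 < G x)
    (hG1 : G 1 < 1) :
    ∃ x₀ > (0:ℝ), ∀ x ≥ x₀,
      Real.exp (-(lowerLegendre (mExt G) (2 * x))) / (4 * x) ≤ momentFun G x ∧
      momentFun G x ≤ Real.exp (-(lowerLegendre (mExt G) x)) :=
  moment_function_estimates_general G hGmono hGpos
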